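/- The preadapted switch distribution satisfies the domination bounds: (i) there exists δ_{−1} > 0 such that for all n ≥ 1 and all strings x_1^n over {1,...,D}, P(x_1^n) ≥ δ_{−1}·D^{−n}; and (ii) for each k ≥ 0 there exists δ_k > 0 such that for all n ≥ k+1 and all strings x_1^n, P(x_1^n) ≥ δ_k·B(x_{k+1}^n|x_1^{k}, k), where B denotes the preadapted predictor. -/
import Mathlib


open Filter MeasureTheory
open scoped Topology

/-- Number of occurrences `c(w|z)` of `w` as a substring of `z`. -/
def cnt {D : ℕ} (w z : List (Fin D)) : ℕ :=
  ((List.range (z.length - w.length + 1)).filter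
    (fun i => (z.drop i).take w.length = w)).length

/-- Count `c(w | z_1^{m-1})` of `w` in the string `z` with its last symbol removed,
with the convention that counting in a block of length `-1` (i.e. when `z` itself is
empty) gives `0`. -/
def cntPred {D : ℕ} (w z : List (Fin D)) : ℕ :=
  if z = [] then 0 else cnt w z.dropLast

/-- The prefix `x_1^n` of the one-sided sequence `x` (0-indexed: `x i = x_{i+1}`). -/
def pref {D : ℕ} (x : ℕ → Fin D) (n : ℕ) : List (Fin D) :=
  (List.range n).map x

/-- Adaptive Markov predictor: the natural-number index corresponds to the Markov
order shifted by one, so `Bpred D xs a (k+1) = B(a | xs, k)` and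
`Bpred D xs a 0 = B(a | xs, -1) = 1/D`, where
`B(x_{n+1}|x_1^n, k) = (c(x_{n+1-k}^{n+1}|x_1^n) + B(x_{n+1}|x_1^n, k-1)) /
(c(x_{n+1-k}^{n}|x_1^{n-1}) + 1)`.  Counts of substrings whose indices fall outside
the string are taken to be zero. -/
noncomputable def Bpred (D : ℕ) (xs : List (Fin D)) (a : Fin D) : ℕ → ℝ
  | 0 => 1 / D
  | k + 1 =>
    if k ≤ xs.length then
      ((cnt (xs.drop (xs.length - k) ++ [a]) xs : ℝ) + Bpred D xs a k) /
      ((cntPred (xs.drop (xs.length - k)) xs : ℝ) + 1)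
    else Bpred D xs a k

/-- Preadapted Markov predictor with training data `y`: the natural-number index
corresponds to the Markov order shifted by one, so `BpredPre D y xs a (k+1) = B(a|xs,k)`
and `BpredPre D y xs a 0 = 1/D`, where
`B(x_{n+1}|x_1^n, k) = (c(x_{n+1-k}^{n+1}|y_1^j x_1^n) + B(x_{n+1}|x_1^n, k-1)) /
(c(x_{n+1-k}^{n}|y_1^j x_1^{n-1}) + 1)`: counts are taken in the concatenated string,
and counts of substrings whose indices fall outside the available string are zero. -/
noncomputable def BpredPre (D : ℕ) (y xs : List (Fin D)) (a : Fin D) : ℕ → ℝ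
  | 0 => 1 / D
  | k + 1 =>
    if k ≤ xs.length then
      ((cnt (xs.drop (xs.length - k) ++ [a]) (y ++ xs) : ℝ) + BpredPre D y xs a k) /
      ((cntPred (xs.drop (xs.length - k)) (y ++ xs) : ℝ) + 1)
    else BpredPre D y xs a k

/-- Partial preadapted switch distribution `P(x_1^n, k)` with Markov order `k : ℤ`. -/
noncomputable def PpartPre (D : ℕ) (p : ℕ → ℝ) (y : List (Fin D)) (x : ℕ → Fin D) :
    ℕ → ℤ → ℝ
  | 0, _ => 0
  | 1, k =>
    if k = -1 then p 0 * BpredPre D y [] (x 0) 0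
    else if k = 0 then (1 - p 0) * BpredPre D y [] (x 0) 1
    else 0
  | n + 2, k =>
    if -1 ≤ k ∧ k ≤ (n : ℤ) + 1 then
      (p (n + 1) * PpartPre D p y x (n + 1) k +
        (1 - p (n + 1)) * PpartPre D p y x (n + 1) (k - 1)) *
        BpredPre D y (pref x (n + 1)) (x (n + 1)) (k + 1).toNat
    else 0

/-- The preadapted switch distribution `P(x_1^n) = Σ_{k=-1}^{n-1} P(x_1^n, k)`. -/
noncomputable def swPre (D : ℕ) (p : ℕ → ℝ) (y : List (Fin D)) (x : ℕ → Fin D) (n : ℕ) : ℝ :=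
  ∑ kk ∈ Finset.range (n + 1), PpartPre D p y x n ((kk : ℤ) - 1)

section Aux

variable {D : ℕ}

lemma cnt_le (w z : List (Fin D)) : cnt w z ≤ z.length + 1 := by
  unfold cnt
  calc ((List.range (z.length - w.length + 1)).filter
      (fun i => (z.drop i).take w.length = w)).length
      ≤ (List.range (z.length - w.length + 1)).length := List.length_filter_le _ _
    _ ≤ z.length + 1 := by rw [List.length_range]; omega

lemma cntPred_le (w z : List (Fin D)) : cntPred w z ≤ z.length := by
  unfold cntPred
  split
  · simp
  · rename_i h
    have h1 := cnt_le w z.dropLast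
    have hz : 1 ≤ z.length := List.length_pos_iff.mpr h
    rw [List.length_dropLast] at h1
    omega

lemma Bpre_nonneg (y xs : List (Fin D)) (a : Fin D) (k : ℕ) :
    0 ≤ BpredPre D y xs a k := by
  induction k with
  | zero => rw [BpredPre]; positivity
  | succ k ih =>
    rw [BpredPre]
    split
    · apply div_nonneg (add_nonneg (Nat.cast_nonneg _) ih); positivity
    · exact ih

lemma Bpre_lb (y xs : List (Fin D)) (a : Fin D) (k : ℕ) :
    1 / (D:ℝ) * (((y.length + xs.length + 1 : ℕ) : ℝ))⁻¹ ^ k ≤ BpredPre D y xs a k := by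
  have hM : (1:ℝ) ≤ ((y.length + xs.length + 1 : ℕ) : ℝ) := by
    exact_mod_cast Nat.one_le_iff_ne_zero.mpr (by omega)
  induction k with
  | zero => rw [BpredPre]; simp
  | succ k ih =>
    have hDn : (0:ℝ) ≤ 1 / (D:ℝ) := by positivity
    have hMi : (0:ℝ) ≤ (((y.length + xs.length + 1 : ℕ) : ℝ))⁻¹ ^ k := by positivity
    have hstep : BpredPre D y xs a k * (((y.length + xs.length + 1 : ℕ) : ℝ))⁻¹
        ≤ BpredPre D y xs a (k+1) := by
      rw [BpredPre]
      split
      · rename_i h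
        have hc : (0:ℝ) ≤ (cnt (xs.drop (xs.length - k) ++ [a]) (y ++ xs) : ℝ) :=
          Nat.cast_nonneg _
        have hd : ((cntPred (xs.drop (xs.length - k)) (y ++ xs) : ℝ) + 1)
            ≤ ((y.length + xs.length + 1 : ℕ) : ℝ) := by
          have h2 := cntPred_le (xs.drop (xs.length - k)) (y ++ xs)
          rw [List.length_append] at h2
          push_cast
          exact_mod_cast by push_cast; linarith [(by exact_mod_cast h2 :
            (cntPred (xs.drop (xs.length - k)) (y ++ xs) : ℝ) ≤ (y.length : ℝ) + xs.length)]
        have hdpos : (0:ℝ) < (cntPred (xs.drop (xs.length - k)) (y ++ xs) : ℝ) + 1 := by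
          positivity
        rw [← div_eq_mul_inv]
        exact div_le_div₀ (add_nonneg hc (Bpre_nonneg y xs a k))
          (le_add_of_nonneg_left hc) hdpos hd
      · have h1 : (((y.length + xs.length + 1 : ℕ) : ℝ))⁻¹ ≤ 1 := inv_le_one_of_one_le₀ hM
        nlinarith [Bpre_nonneg y xs a k]
    calc 1 / (D:ℝ) * (((y.length + xs.length + 1 : ℕ) : ℝ))⁻¹ ^ (k+1)
        = (1 / (D:ℝ) * (((y.length + xs.length + 1 : ℕ) : ℝ))⁻¹ ^ k) *
          (((y.length + xs.length + 1 : ℕ) : ℝ))⁻¹ := by ring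
      _ ≤ BpredPre D y xs a k * (((y.length + xs.length + 1 : ℕ) : ℝ))⁻¹ := by
          apply mul_le_mul_of_nonneg_right ih; positivity
      _ ≤ _ := hstep

lemma Bpre_pos (hD : 1 ≤ D) (y xs : List (Fin D)) (a : Fin D) (k : ℕ) :
    0 < BpredPre D y xs a k := by
  have h := Bpre_lb (D := D) y xs a k
  have hM : (0:ℝ) < ((y.length + xs.length + 1 : ℕ) : ℝ) := by positivity
  have : (0:ℝ) < 1 / (D:ℝ) * (((y.length + xs.length + 1 : ℕ) : ℝ))⁻¹ ^ k := by
    have hD' : (0:ℝ) < (D:ℝ) := by exact_mod_cast hD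
    positivity
  linarith

lemma Ppart_zero_lt (p : ℕ → ℝ) (y : List (Fin D)) (x : ℕ → Fin D) :
    ∀ n : ℕ, ∀ k : ℤ, k < -1 → PpartPre D p y x n k = 0 := by
  intro n
  induction n with
  | zero => intro k hk; rw [PpartPre]
  | succ m ih =>
    intro k hk
    match m with
    | 0 =>
      rw [PpartPre]
      rw [if_neg (by omega), if_neg (by omega)]
    | m' + 1 =>
      rw [PpartPre]
      rw [if_neg (by omega)]

lemma Ppart_zero_ge (p : ℕ → ℝ) (y : List (Fin D)) (x : ℕ → Fin D) :
    ∀ n : ℕ, ∀ k : ℤ, (n : ℤ) ≤ k → PpartPre D p y x n k = 0 := by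
  intro n
  induction n with
  | zero => intro k hk; rw [PpartPre]
  | succ m ih =>
    intro k hk
    match m with
    | 0 =>
      rw [PpartPre]
      rw [if_neg (by omega), if_neg (by omega)]
    | m' + 1 =>
      rw [PpartPre]
      rw [if_neg (by push_cast at hk ⊢; omega)]

lemma Ppart_nonneg (p : ℕ → ℝ) (hp : ∀ n, p n ∈ Set.Ioo (0 : ℝ) 1)
    (y : List (Fin D)) (x : ℕ → Fin D) :
    ∀ n : ℕ, ∀ k : ℤ, 0 ≤ PpartPre D p y x n k := by
  intro n
  induction n with
  | zero => intro k; rw [PpartPre]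
  | succ m ih =>
    intro k
    match m with
    | 0 =>
      rw [PpartPre]
      split
      · exact mul_nonneg (hp 0).1.le (Bpre_nonneg y [] (x 0) 0)
      · split
        · exact mul_nonneg (by linarith [(hp 0).2]) (Bpre_nonneg y [] (x 0) 1)
        · exact le_refl 0
    | m' + 1 =>
      rw [PpartPre]
      split
      · apply mul_nonneg
        · apply add_nonneg
          · exact mul_nonneg (hp (m'+1)).1.le (ih k)
          · exact mul_nonneg (by linarith [(hp (m'+1)).2]) (ih (k-1))
        · exact Bpre_nonneg _ _ _ _
      · exact le_refl 0

end Aux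

section Aux2

variable {D : ℕ}

lemma pref_length (x : ℕ → Fin D) (n : ℕ) : (pref x n).length = n := by
  simp [pref]

lemma pref_zero (x : ℕ → Fin D) : pref x 0 = [] := by simp [pref]

lemma prod_p_range_ge (p : ℕ → ℝ) (hp : ∀ n, p n ∈ Set.Ioo (0 : ℝ) 1) (L : ℝ)
    (hL : Tendsto (fun N : ℕ => ∏ i ∈ Finset.range N, p i) atTop (𝓝 L)) (N : ℕ) :
    L ≤ ∏ i ∈ Finset.range N, p i := by
  apply le_of_tendsto hL
  filter_upwards [eventually_ge_atTop N] with M hM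
  have h1 : (∏ i ∈ Finset.range N, p i) * ∏ i ∈ Finset.Ico N M, p i
      = ∏ i ∈ Finset.range M, p i := Finset.prod_range_mul_prod_Ico p hM
  have h2 : ∏ i ∈ Finset.Ico N M, p i ≤ 1 :=
    Finset.prod_le_one (fun i _ => (hp i).1.le) (fun i _ => (hp i).2.le)
  have h3 : (0:ℝ) ≤ ∏ i ∈ Finset.range N, p i :=
    Finset.prod_nonneg (fun i _ => (hp i).1.le)
  nlinarith

lemma prod_p_Ico_ge (p : ℕ → ℝ) (hp : ∀ n, p n ∈ Set.Ioo (0 : ℝ) 1) (L : ℝ)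
    (hL : Tendsto (fun N : ℕ => ∏ i ∈ Finset.range N, p i) atTop (𝓝 L))
    (a b : ℕ) (hab : a ≤ b) : L ≤ ∏ i ∈ Finset.Ico a b, p i := by
  have h1 : (∏ i ∈ Finset.range a, p i) * ∏ i ∈ Finset.Ico a b, p i
      = ∏ i ∈ Finset.range b, p i := Finset.prod_range_mul_prod_Ico p hab
  have h2 : ∏ i ∈ Finset.range a, p i ≤ 1 :=
    Finset.prod_le_one (fun i _ => (hp i).1.le) (fun i _ => (hp i).2.le)
  have h3 : (0:ℝ) ≤ ∏ i ∈ Finset.Ico a b, p i :=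
    Finset.prod_nonneg (fun i _ => (hp i).1.le)
  have h4 := prod_p_range_ge p hp L hL b
  nlinarith

lemma Ppart_neg_one (p : ℕ → ℝ) (y : List (Fin D)) (x : ℕ → Fin D) :
    ∀ m : ℕ, PpartPre D p y x (m+1) (-1)
      = (∏ i ∈ Finset.range (m+1), p i) * ((D:ℝ))⁻¹ ^ (m+1) := by
  intro m
  induction m with
  | zero =>
    rw [PpartPre, if_pos rfl, BpredPre]
    simp [one_div]
  | succ m ih =>
    rw [PpartPre, if_pos (by constructor <;> omega)]
    rw [Ppart_zero_lt p y x (m+1) (-1-1) (by omega)]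
    have ht : ((-1 : ℤ) + 1).toNat = 0 := by omega
    rw [ht, BpredPre, ih, Finset.prod_range_succ p (m+1), one_div, pow_succ]
    ring

lemma Ppart_le_sw (p : ℕ → ℝ) (hp : ∀ n, p n ∈ Set.Ioo (0 : ℝ) 1)
    (y : List (Fin D)) (x : ℕ → Fin D) (n kk : ℕ) (h : kk ≤ n) :
    PpartPre D p y x n ((kk : ℤ) - 1) ≤ swPre D p y x n := by
  apply Finset.single_le_sum (f := fun j : ℕ => PpartPre D p y x n ((j : ℤ) - 1))
  · exact fun i _ => Ppart_nonneg p hp y x n _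
  · exact Finset.mem_range.mpr (by omega)

lemma Ppart_diag_pos (hD : 1 ≤ D) (p : ℕ → ℝ) (hp : ∀ n, p n ∈ Set.Ioo (0 : ℝ) 1)
    (y : List (Fin D)) (k : ℕ) :
    ∃ c > (0:ℝ), ∀ x : ℕ → Fin D, c ≤ PpartPre D p y x (k+1) (k : ℤ) := by
  have hD' : (0:ℝ) < (D:ℝ) := by exact_mod_cast hD
  induction k with
  | zero =>
    refine ⟨(1 - p 0) * (1/(D:ℝ) * (((y.length + 0 + 1 : ℕ) : ℝ))⁻¹ ^ 1), ?_, ?_⟩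
    · have h1 : (0:ℝ) < 1 - p 0 := by linarith [(hp 0).2]
      have hM : (0:ℝ) < ((y.length + 0 + 1 : ℕ) : ℝ) := by positivity
      exact mul_pos h1 (mul_pos (one_div_pos.mpr hD') (pow_pos (inv_pos.mpr hM) 1))
    · intro x
      rw [PpartPre, if_neg (by omega), if_pos (show ((0:ℕ):ℤ) = 0 by norm_num)]
      exact mul_le_mul_of_nonneg_left (Bpre_lb y [] (x 0) 1) (by linarith [(hp 0).2])
  | succ k ih =>
    obtain ⟨c, hc, hcx⟩ := ih
    refine ⟨(1 - p (k+1)) * c *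
      (1/(D:ℝ) * (((y.length + (k+1) + 1 : ℕ) : ℝ))⁻¹ ^ (k+2)), ?_, ?_⟩
    · have h1 : (0:ℝ) < 1 - p (k+1) := by linarith [(hp (k+1)).2]
      have hM : (0:ℝ) < ((y.length + (k+1) + 1 : ℕ) : ℝ) := by positivity
      have hD'' : (0:ℝ) < 1/(D:ℝ) := one_div_pos.mpr hD'
      exact mul_pos (mul_pos h1 hc) (mul_pos hD'' (pow_pos (inv_pos.mpr hM) (k+2)))
    · intro x
      have hcast : ((k+1 : ℕ) : ℤ) = (k : ℤ) + 1 := by push_cast; ring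
      rw [hcast, PpartPre, if_pos (by constructor <;> omega)]
      rw [Ppart_zero_ge p y x (k+1) ((k:ℤ)+1) (by omega), mul_zero, zero_add]
      have e1 : (k:ℤ) + 1 - 1 = (k:ℤ) := by ring
      rw [e1]
      have ht : ((k:ℤ) + 1 + 1).toNat = k + 2 := by omega
      rw [ht]
      have hB := Bpre_lb y (pref x (k+1)) (x (k+1)) (k+2)
      rw [pref_length] at hB
      have hq : (0:ℝ) ≤ 1 - p (k+1) := by linarith [(hp (k+1)).2]
      have hP := hcx x
      have hε : (0:ℝ) ≤ 1/(D:ℝ) * (((y.length + (k+1) + 1 : ℕ) : ℝ))⁻¹ ^ (k+2) := by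
        positivity
      calc (1 - p (k+1)) * c * (1/(D:ℝ) * (((y.length + (k+1) + 1 : ℕ) : ℝ))⁻¹ ^ (k+2))
          ≤ (1 - p (k+1)) * PpartPre D p y x (k+1) (k:ℤ) *
            (1/(D:ℝ) * (((y.length + (k+1) + 1 : ℕ) : ℝ))⁻¹ ^ (k+2)) := by
            apply mul_le_mul_of_nonneg_right _ hε
            exact mul_le_mul_of_nonneg_left hP hq
        _ ≤ (1 - p (k+1)) * PpartPre D p y x (k+1) (k:ℤ) *
            BpredPre D y (pref x (k+1)) (x (k+1)) (k+2) := by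
            apply mul_le_mul_of_nonneg_left hB
            exact mul_nonneg hq (Ppart_nonneg p hp y x (k+1) (k:ℤ))

lemma Ppart_base (hD : 1 ≤ D) (p : ℕ → ℝ) (hp : ∀ n, p n ∈ Set.Ioo (0 : ℝ) 1)
    (y : List (Fin D)) (k : ℕ) :
    ∃ c > (0:ℝ), ∀ x : ℕ → Fin D,
      c * BpredPre D y (pref x k) (x k) (k+1) ≤ PpartPre D p y x (k+1) (k : ℤ) := by
  match k with
  | 0 =>
    refine ⟨1 - p 0, by linarith [(hp 0).2], fun x => ?_⟩
    rw [PpartPre, if_neg (by omega), if_pos (show ((0:ℕ):ℤ) = 0 by norm_num), pref_zero]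
  | k + 1 =>
    obtain ⟨c, hc, hcx⟩ := Ppart_diag_pos hD p hp y k
    refine ⟨(1 - p (k+1)) * c, mul_pos (by linarith [(hp (k+1)).2]) hc, fun x => ?_⟩
    have hcast : ((k+1 : ℕ) : ℤ) = (k : ℤ) + 1 := by push_cast; ring
    rw [hcast, PpartPre, if_pos (by constructor <;> omega)]
    rw [Ppart_zero_ge p y x (k+1) ((k:ℤ)+1) (by omega), mul_zero, zero_add]
    have e1 : (k:ℤ) + 1 - 1 = (k:ℤ) := by ring
    rw [e1]
    have ht : ((k:ℤ) + 1 + 1).toNat = k + 2 := by omega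
    rw [ht]
    have hq : (0:ℝ) ≤ 1 - p (k+1) := by linarith [(hp (k+1)).2]
    have hB := Bpre_nonneg y (pref x (k+1)) (x (k+1)) (k+2)
    calc (1 - p (k+1)) * c * BpredPre D y (pref x (k+1)) (x (k+1)) (k+1+1)
        ≤ (1 - p (k+1)) * PpartPre D p y x (k+1) (k:ℤ) *
          BpredPre D y (pref x (k+1)) (x (k+1)) (k+2) := by
          apply mul_le_mul_of_nonneg_right _ hB
          exact mul_le_mul_of_nonneg_left (hcx x) hq
      _ = _ := rfl

lemma Ppart_ge_prod (hD : 1 ≤ D) (p : ℕ → ℝ) (hp : ∀ n, p n ∈ Set.Ioo (0 : ℝ) 1)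
    (y : List (Fin D)) (k : ℕ) :
    ∃ c > (0:ℝ), ∀ n : ℕ, k + 1 ≤ n → ∀ x : ℕ → Fin D,
      c * (∏ i ∈ Finset.Ico (k+1) n, p i) *
        (∏ i ∈ Finset.Icc (k+1) n, BpredPre D y (pref x (i-1)) (x (i-1)) (k+1))
        ≤ PpartPre D p y x n (k : ℤ) := by
  obtain ⟨c, hc, hcx⟩ := Ppart_base hD p hp y k
  refine ⟨c, hc, ?_⟩
  intro n hn
  induction n, hn using Nat.le_induction with
  | base =>
    intro x
    rw [Finset.Ico_self, Finset.prod_empty, mul_one, Finset.Icc_self,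
      Finset.prod_singleton]
    have : k + 1 - 1 = k := by omega
    rw [this]
    exact hcx x
  | succ n hn ihn =>
    intro x
    obtain ⟨m, rfl⟩ : ∃ m, n = m + 1 := ⟨n - 1, by omega⟩
    have hkm : k ≤ m := by omega
    rw [PpartPre, if_pos (by constructor <;> omega)]
    have ht : ((k:ℤ) + 1).toNat = k + 1 := by omega
    rw [ht]
    rw [Finset.prod_Ico_succ_top (by omega : k + 1 ≤ m + 1)]
    rw [Finset.prod_Icc_succ_top (by omega : k + 1 ≤ m + 2)]
    have hsimp : m + 2 - 1 = m + 1 := by omega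
    rw [hsimp]
    set B := BpredPre D y (pref x (m+1)) (x (m+1)) (k+1) with hB
    set P := PpartPre D p y x (m+1) (k:ℤ) with hP
    set P' := PpartPre D p y x (m+1) ((k:ℤ)-1) with hP'
    have hBn : (0:ℝ) ≤ B := Bpre_nonneg _ _ _ _
    have hPn : (0:ℝ) ≤ P := Ppart_nonneg p hp y x _ _
    have hP'n : (0:ℝ) ≤ P' := Ppart_nonneg p hp y x _ _
    have hpm := hp (m+1)
    have hih := ihn x
    have h1 : c * (∏ i ∈ Finset.Ico (k+1) (m+1), p i) *
        (∏ i ∈ Finset.Icc (k+1) (m+1), BpredPre D y (pref x (i-1)) (x (i-1)) (k+1)) *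
        (p (m+1) * B) ≤ P * (p (m+1) * B) := by
      apply mul_le_mul_of_nonneg_right hih
      exact mul_nonneg hpm.1.le hBn
    have h2 : P * (p (m+1) * B) ≤ (p (m+1) * P + (1 - p (m+1)) * P') * B := by
      have : (0:ℝ) ≤ (1 - p (m+1)) * P' := mul_nonneg (by linarith [hpm.2]) hP'n
      nlinarith
    calc c * ((∏ i ∈ Finset.Ico (k+1) (m+1), p i) * p (m+1)) *
        ((∏ i ∈ Finset.Icc (k+1) (m+1), BpredPre D y (pref x (i-1)) (x (i-1)) (k+1)) * B)
        = c * (∏ i ∈ Finset.Ico (k+1) (m+1), p i) *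
          (∏ i ∈ Finset.Icc (k+1) (m+1), BpredPre D y (pref x (i-1)) (x (i-1)) (k+1)) *
          (p (m+1) * B) := by ring
      _ ≤ P * (p (m+1) * B) := h1
      _ ≤ (p (m+1) * P + (1 - p (m+1)) * P') * B := h2

end Aux2

/-- The preadapted switch distribution satisfies the domination bounds:
(i) there exists `δ_{−1} > 0` such that for all `n ≥ 1` and all strings `x_1^n`,
`P(x_1^n) ≥ δ_{−1}·D^{−n}`; and (ii) for each `k ≥ 0` there exists `δ_k > 0` such that
for all `n ≥ k+1` and all strings `x_1^n`, `P(x_1^n) ≥ δ_k·B(x_{k+1}^n|x_1^{k}, k)`,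
where `B` denotes the preadapted predictor and
`B(x_{k+1}^n|x_1^k, k) = ∏_{i=k+1}^n B(x_i|x_1^{i-1}, k)`. -/
theorem preadapted_switch_domination
    (D : ℕ) (hD : 2 ≤ D) (y : List (Fin D))
    (p : ℕ → ℝ) (hp : ∀ n, p n ∈ Set.Ioo (0 : ℝ) 1)
    (hprod : ∃ L, 0 < L ∧ Tendsto (fun N : ℕ => ∏ i ∈ Finset.range N, p i) atTop (𝓝 L)) :
    (∃ δ > (0 : ℝ), ∀ n : ℕ, 1 ≤ n → ∀ x : ℕ → Fin D,
      δ * ((D : ℝ) ^ n)⁻¹ ≤ swPre D p y x n) ∧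
    (∀ k : ℕ, ∃ δ > (0 : ℝ), ∀ n : ℕ, k + 1 ≤ n → ∀ x : ℕ → Fin D,
      δ * (∏ i ∈ Finset.Icc (k + 1) n,
          BpredPre D y (pref x (i - 1)) (x (i - 1)) (k + 1)) ≤ swPre D p y x n) := by
  obtain ⟨L, hL0, hLt⟩ := hprod
  have hD1 : 1 ≤ D := by omega
  constructor
  · refine ⟨L, hL0, ?_⟩
    intro n hn x
    obtain ⟨m, rfl⟩ : ∃ m, n = m + 1 := ⟨n - 1, by omega⟩
    have h1 := Ppart_le_sw p hp y x (m+1) 0 (by omega)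
    have hc0 : ((0:ℕ):ℤ) - 1 = -1 := by norm_num
    rw [hc0, Ppart_neg_one p y x m] at h1
    have h3 : L * ((D:ℝ) ^ (m+1))⁻¹
        ≤ (∏ i ∈ Finset.range (m+1), p i) * ((D:ℝ))⁻¹ ^ (m+1) := by
      rw [← inv_pow]
      exact mul_le_mul_of_nonneg_right (prod_p_range_ge p hp L hLt (m+1)) (by positivity)
    linarith
  · intro k
    obtain ⟨c, hc, hcx⟩ := Ppart_ge_prod hD1 p hp y k
    refine ⟨c * L, mul_pos hc hL0, ?_⟩
    intro n hn x
    have hB : (0:ℝ) ≤ ∏ i ∈ Finset.Icc (k+1) n,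
        BpredPre D y (pref x (i-1)) (x (i-1)) (k+1) :=
      Finset.prod_nonneg (fun i _ => Bpre_nonneg _ _ _ _)
    have h1 : c * L * (∏ i ∈ Finset.Icc (k+1) n,
        BpredPre D y (pref x (i-1)) (x (i-1)) (k+1))
        ≤ c * (∏ i ∈ Finset.Ico (k+1) n, p i) * (∏ i ∈ Finset.Icc (k+1) n,
          BpredPre D y (pref x (i-1)) (x (i-1)) (k+1)) := by
      apply mul_le_mul_of_nonneg_right _ hB
      exact mul_le_mul_of_nonneg_left (prod_p_Ico_ge p hp L hLt (k+1) n hn) hc.le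
    have h2 := hcx n hn x
    have h3 := Ppart_le_sw p hp y x n (k+1) (by omega)
    have hc2 : ((k+1:ℕ):ℤ) - 1 = (k:ℤ) := by push_cast; ring
    rw [hc2] at h3
    linarith
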